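/- Let C be a regular, irreducible curve that is projective over a field k, with function field F = k(C), arithmetic genus t, and a k-rational point O, and fix functions f_R as below for all closed points R ≠ O of degree ≥ t+1. If P, Q ≠ O satisfy 2t + 1 ≤ deg(Q) ≤ deg(P) ≤ 3t, then the symbol {f_P, f_Q} lies in L_{3t} + ⟨ {f_R, l} : l a nonzero element of RR_{3t} and R ≠ O a closed point with 2t + 1 ≤ deg(R) ≤ 3t ⟩, as a subgroup of K₂(F). -/

import Mathlib

open scoped TensorProduct

noncomputable section

/-- The set of Steinberg relations in `Fˣ ⊗_ℤ Fˣ` (written additively):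
the elements `a ⊗ b` with `a + b = 1` in `F`. -/
def SteinbergSet (F : Type*) [Field F] :
    Set (TensorProduct ℤ (Additive Fˣ) (Additive Fˣ)) :=
  { x | ∃ a b : Fˣ, (a : F) + (b : F) = 1 ∧
      x = Additive.ofMul a ⊗ₜ[ℤ] Additive.ofMul b }

/-- Milnor's `K₂` of a field, via Matsumoto's presentation. -/
abbrev K2 (F : Type*) [Field F] :=
  (TensorProduct ℤ (Additive Fˣ) (Additive Fˣ)) ⧸
    Submodule.span ℤ (SteinbergSet F)

/-- The symbol `{f, g}` in `K₂(F)`. -/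
def symbol {F : Type*} [Field F] (f g : Fˣ) : K2 F :=
  Submodule.Quotient.mk (Additive.ofMul f ⊗ₜ[ℤ] Additive.ofMul g)

/-- The degree of a divisor `D` on the curve: `∑_P deg(P) · D(P)`,
where `deg P = [k(P) : k]`. -/
def divDeg (k : Type*) [Field k] {Pt : Type*} (res : Pt → Type*)
    [∀ P, Field (res P)] [∀ P, Algebra k (res P)] (D : Pt →₀ ℤ) : ℤ :=
  ∑ᶠ P, (Module.finrank k (res P) : ℤ) * D P

/-- Axioms for a regular, irreducible curve `C`, projective over a field `k`, with
`H⁰(C, O_C) = k`, presented through: its function field `F = k(C)`, its set `Pt` of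
closed points, the residue fields `res P = k(P)`, the normalized valuations `ord P`,
the evaluation maps `ev P` (evaluation at `P` of functions regular at `P`), the
Riemann-Roch spaces `L D = H⁰(C, O_C(D))`, and the arithmetic genus
`t = dim_k H¹(C, O_C)`, characterized by the Riemann-Roch relations. -/
structure IsProjCurve (k F : Type*) [Field k] [Field F] [Algebra k F]
    {Pt : Type*} (res : Pt → Type*) [∀ P, Field (res P)] [∀ P, Algebra k (res P)]
    (ord : Pt → F → ℤ) (ev : ∀ P, F → res P)
    (L : (Pt →₀ ℤ) → Submodule k F) (t : ℕ) : Prop where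
  finiteDimensional_res : ∀ P, FiniteDimensional k (res P)
  ord_mul : ∀ P (f g : F), f ≠ 0 → g ≠ 0 → ord P (f * g) = ord P f + ord P g
  ord_add : ∀ P (f g : F), f ≠ 0 → g ≠ 0 → f + g ≠ 0 →
      min (ord P f) (ord P g) ≤ ord P (f + g)
  ord_algebraMap : ∀ P (c : k), c ≠ 0 → ord P (algebraMap k F c) = 0
  ord_uniformizer : ∀ P, ∃ f : F, f ≠ 0 ∧ ord P f = 1
  ord_separates : ∀ P Q, (∀ f : F, ord P f = ord Q f) → P = Q
  support_finite : ∀ f : F, f ≠ 0 → {P | ord P f ≠ 0}.Finite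
  degree_formula : ∀ f : F, f ≠ 0 →
      ∑ᶠ P, (Module.finrank k (res P) : ℤ) * ord P f = 0
  ev_zero : ∀ P, ev P 0 = 0
  ev_one : ∀ P, ev P 1 = 1
  ev_add : ∀ P (f g : F), f ≠ 0 → g ≠ 0 → 0 ≤ ord P f → 0 ≤ ord P g →
      ev P (f + g) = ev P f + ev P g
  ev_mul : ∀ P (f g : F), f ≠ 0 → g ≠ 0 → 0 ≤ ord P f → 0 ≤ ord P g →
      ev P (f * g) = ev P f * ev P g
  ev_algebraMap : ∀ P (c : k), ev P (algebraMap k F c) = algebraMap k (res P) c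
  ev_eq_zero_iff : ∀ P (f : F), f ≠ 0 → 0 ≤ ord P f → (ev P f = 0 ↔ 0 < ord P f)
  ev_surjective : ∀ P (y : res P), ∃ f : F, f ≠ 0 ∧ 0 ≤ ord P f ∧ ev P f = y
  mem_L : ∀ (D : Pt →₀ ℤ) (f : F), f ∈ L D ↔ (f ≠ 0 → ∀ P, 0 ≤ D P + ord P f)
  finiteDimensional_L : ∀ D, FiniteDimensional k (L D)
  global_sections : ∀ f : F, f ∈ L 0 ↔ ∃ c : k, algebraMap k F c = f
  rr_ineq : ∀ D : Pt →₀ ℤ,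
      divDeg k res D + 1 - t ≤ (Module.finrank k (L D) : ℤ)
  rr_eq : ∀ D : Pt →₀ ℤ, 2 * (t : ℤ) - 2 < divDeg k res D →
      (Module.finrank k (L D) : ℤ) = divDeg k res D + 1 - t

/-- `T` is the tame symbol `K₂(F) → ∐_{P} k(P)^*`: it is determined by
`T_P({f,g}) = (-1)^{ord_P(f)·ord_P(g)} (f^{ord_P(g)} / g^{ord_P(f)})(P)`. -/
def IsTameSymbol {F : Type*} [Field F] {Pt : Type*} {res : Pt → Type*}
    [∀ P, Field (res P)]
    (ord : Pt → F → ℤ) (ev : ∀ P, F → res P)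
    (T : K2 F →+ Π₀ P : Pt, Additive ((res P)ˣ)) : Prop :=
  ∀ (f g : Fˣ) (P : Pt),
    ((Additive.toMul (T (symbol f g) P) : (res P)ˣ) : res P) =
      ev P (((-1 : Fˣ) ^ (ord P (f : F) * ord P (g : F)) *
        f ^ (ord P (g : F)) * g ^ (-ord P (f : F)) : Fˣ) : F)

/-- `L_d`: the subgroup of `K₂(F)` generated by the symbols `{l, m}` with `l, m`
nonzero elements of the Riemann-Roch space `H⁰(C, O_C(d(O)))`. -/
def Lsub {k F : Type*} [Field k] [Field F] [Algebra k F] {Pt : Type*}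
    (L : (Pt →₀ ℤ) → Submodule k F) (O : Pt) (d : ℤ) : AddSubgroup (K2 F) :=
  AddSubgroup.closure
    { x | ∃ l m : Fˣ, (l : F) ∈ L (Finsupp.single O d) ∧
        (m : F) ∈ L (Finsupp.single O d) ∧ x = symbol l m }

/-!
By Riemann–Roch, `dim L(3t·O) = 2t + 1`, while `a f_P` and `b f_Q` lie in
`L(D_P + D_Q + (2t + deg P)·O)`, of dimension `3t + deg P + 1 < 3(2t + 1)`. Hence there are
`a, b, c ∈ L(3t·O)` with `(a, b) ≠ 0` and `a f_P + b f_Q = c`. Expanding the Steinberg relation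
`{a f_P / c, b f_Q / c} = 0` (or solving for `f_P` or `f_Q` when one of `a, b, c` vanishes)
writes `{f_P, f_Q}` through symbols of elements of `L(3t·O)` and symbols `{f_P, l}`, `{f_Q, l}`
with `l ∈ L(3t·O)`.
-/

section Symbol

variable {F : Type*} [Field F]

theorem symbol_mul_left (f g h : Fˣ) : symbol (f * g) h = symbol f h + symbol g h := by
  rw [symbol, symbol, symbol, ← Submodule.Quotient.mk_add, ofMul_mul, TensorProduct.add_tmul]

theorem symbol_mul_right (f g h : Fˣ) : symbol f (g * h) = symbol f g + symbol f h := by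
  rw [symbol, symbol, symbol, ← Submodule.Quotient.mk_add, ofMul_mul, TensorProduct.tmul_add]

theorem symbol_inv_left (f g : Fˣ) : symbol f⁻¹ g = -symbol f g := by
  rw [symbol, symbol, ← Submodule.Quotient.mk_neg, ← TensorProduct.neg_tmul, ← ofMul_inv]

theorem symbol_inv_right (f g : Fˣ) : symbol f g⁻¹ = -symbol f g := by
  rw [symbol, symbol, ← Submodule.Quotient.mk_neg, ← TensorProduct.tmul_neg, ← ofMul_inv]

theorem symbol_div_left (f g h : Fˣ) : symbol (f / g) h = symbol f h - symbol g h := by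
  rw [div_eq_mul_inv, symbol_mul_left, symbol_inv_left, sub_eq_add_neg]

theorem symbol_div_right (f g h : Fˣ) : symbol f (g / h) = symbol f g - symbol f h := by
  rw [div_eq_mul_inv, symbol_mul_right, symbol_inv_right, sub_eq_add_neg]

theorem symbol_one_left (g : Fˣ) : symbol 1 g = 0 := by
  rw [symbol, ofMul_one, TensorProduct.zero_tmul, Submodule.Quotient.mk_zero]

theorem symbol_eq_zero_of_add_eq_one {a b : Fˣ} (hab : (a : F) + b = 1) : symbol a b = 0 :=
  (Submodule.Quotient.mk_eq_zero _).2 (Submodule.subset_span ⟨a, b, hab, rfl⟩)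

theorem symbol_neg_self (u : Fˣ) : symbol u (-u) = 0 := by
  rcases eq_or_ne u 1 with rfl | hu
  · exact symbol_one_left _
  have hu₁ : (1 : F) - u ≠ 0 := sub_ne_zero.2 (Ne.symm (Units.val_eq_one.not.2 hu))
  have hu₂ : (1 : F) - (u⁻¹ : Fˣ) ≠ 0 :=
    sub_ne_zero.2 (Ne.symm (Units.val_eq_one.not.2 (inv_ne_one.2 hu)))
  -- `-u = (1 - u) / (1 - u⁻¹)`
  have hneg : -u = Units.mk0 _ hu₁ / Units.mk0 _ hu₂ := by
    rw [eq_div_iff_mul_eq']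
    ext
    simp only [Units.val_mul, Units.val_neg, Units.val_mk0, Units.val_inv_eq_inv_val]
    field_simp
    ring
  have h₁ : symbol u (Units.mk0 _ hu₁) = 0 := symbol_eq_zero_of_add_eq_one (by simp)
  have h₂ : symbol u (Units.mk0 _ hu₂) = 0 := by
    rw [← neg_eq_zero, ← symbol_inv_left]
    exact symbol_eq_zero_of_add_eq_one (by simp)
  rw [hneg, symbol_div_right, h₁, h₂, sub_zero]

theorem symbol_antisymm (u v : Fˣ) : symbol v u = -symbol u v := by
  have h := symbol_neg_self (u * v)
  rw [symbol_mul_left, ← neg_mul, symbol_mul_right, neg_mul_comm, symbol_mul_right,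
    symbol_neg_self, symbol_neg_self, zero_add, add_zero] at h
  exact eq_neg_of_add_eq_zero_right h

theorem symbol_mem_of_mul_add_mul_eq {G : AddSubgroup (K2 F)} {S : Set F}
    (hS : ∀ l m : Fˣ, (l : F) ∈ S → (m : F) ∈ S → symbol l m ∈ G) {u v : Fˣ}
    (hu : ∀ l : Fˣ, (l : F) ∈ S → symbol u l ∈ G) (hv : ∀ l : Fˣ, (l : F) ∈ S → symbol v l ∈ G)
    {a b c : F} (ha : a ∈ S) (hb : b ∈ S) (hc : c ∈ S) (hab : a ≠ 0 ∨ b ≠ 0)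
    (h : a * u + b * v = c) : symbol u v ∈ G := by
  have hv' (l : Fˣ) (hl : (l : F) ∈ S) : symbol l v ∈ G := by
    rw [symbol_antisymm]; exact neg_mem (hv l hl)
  rcases eq_or_ne a 0 with rfl | ha0
  · have hb0 := hab.resolve_left (not_not.2 rfl)
    have hc0 : c ≠ 0 := by rw [← h]; simp [hb0]
    have hveq : v = Units.mk0 c hc0 / Units.mk0 b hb0 := by
      rw [eq_div_iff_mul_eq']; ext; simp [← h, mul_comm]
    rw [hveq, symbol_div_right]
    exact sub_mem (hu _ hc) (hu _ hb)
  rcases eq_or_ne b 0 with rfl | hb0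
  · have hc0 : c ≠ 0 := by rw [← h]; simp [ha0]
    have hueq : u = Units.mk0 c hc0 / Units.mk0 a ha0 := by
      rw [eq_div_iff_mul_eq']; ext; simp [← h, mul_comm]
    rw [hueq, symbol_div_left]
    exact sub_mem (hv' _ hc) (hv' _ ha)
  set A := Units.mk0 a ha0
  set B := Units.mk0 b hb0
  rcases eq_or_ne c 0 with rfl | hc0
  · have hveq : v = -u * (A / B) := by
      ext
      simp only [Units.val_mul, Units.val_neg, Units.val_div_eq_div_val, Units.val_mk0, A, B]
      field_simp
      linear_combination h
    rw [hveq, symbol_mul_right, symbol_neg_self, zero_add, symbol_div_right]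
    exact sub_mem (hu _ ha) (hu _ hb)
  set C := Units.mk0 c hc0
  have hsteinberg := symbol_eq_zero_of_add_eq_one (a := A * u / C) (b := B * v / C) (by
    simp only [Units.val_mul, Units.val_div_eq_div_val, Units.val_mk0, A, B, C]
    field_simp
    exact h)
  have key : symbol u v = symbol A C + symbol u C + symbol C B + symbol C v
      - symbol A B - symbol A v - symbol u B - symbol C C := by
    simp only [symbol_div_left, symbol_div_right, symbol_mul_left, symbol_mul_right]
      at hsteinberg
    rw [← sub_eq_zero, ← hsteinberg]
    abel
  rw [key]
  exact sub_mem (sub_mem (sub_mem (sub_mem (add_mem (add_mem (add_mem (hS _ _ ha hc) (hu _ hc))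
    (hS _ _ hc hb)) (hv' _ hc)) (hS _ _ ha hb)) (hv' _ ha)) (hu _ hb)) (hS _ _ hc hc)

end Symbol

theorem exists_mul_add_mul_mem_of_finrank_lt {k A : Type*} [Field k] [Ring A] [Algebra k A]
    {V W : Submodule k A} [FiniteDimensional k W] (hVW : V ≤ W) {u v : A}
    (hu : ∀ a ∈ V, a * u ∈ W) (hv : ∀ b ∈ V, b * v ∈ W)
    (hdim : Module.finrank k W < 3 * Module.finrank k V) :
    ∃ a ∈ V, ∃ b ∈ V, (a ≠ 0 ∨ b ≠ 0) ∧ a * u + b * v ∈ V := by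
  have := Submodule.finiteDimensional_of_le hVW
  let φ : V × V × V →ₗ[k] W :=
    { toFun := fun x => ⟨x.1 * u + x.2.1 * v - x.2.2,
        W.sub_mem (W.add_mem (hu _ x.1.2) (hv _ x.2.1.2)) (hVW x.2.2.2)⟩
      map_add' := fun x y => by
        ext
        simp only [Prod.fst_add, Prod.snd_add, Submodule.coe_add, add_mul]
        abel
      map_smul' := fun r x => by
        ext
        simp only [Prod.smul_fst, Prod.smul_snd, Submodule.coe_smul, RingHom.id_apply,
          smul_mul_assoc, smul_add, smul_sub] }
  have hker : LinearMap.ker φ ≠ ⊥ := LinearMap.ker_ne_bot_of_finrank_lt (by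
    rw [Module.finrank_prod, Module.finrank_prod]
    omega)
  obtain ⟨⟨a, b, c⟩, hx, hx0⟩ := Submodule.exists_mem_ne_zero_of_ne_bot hker
  have hc : (a : A) * u + b * v = c := sub_eq_zero.1 (congrArg Subtype.val hx)
  refine ⟨a, a.2, b, b.2, ?_, hc ▸ c.2⟩
  by_contra! hab
  apply hx0
  have hc0 : (c : A) = 0 := by rw [← hc, hab.1, hab.2, zero_mul, zero_mul, add_zero]
  ext <;> simp [hab.1, hab.2, hc0]

section Divisor

variable (k : Type*) [Field k] {Pt : Type*} (res : Pt → Type*)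
  [∀ P, Field (res P)] [∀ P, Algebra k (res P)]

theorem divDeg_add (D E : Pt →₀ ℤ) :
    divDeg k res (D + E) = divDeg k res D + divDeg k res E := by
  have hfin (D : Pt →₀ ℤ) :
      (Function.support fun P => (Module.finrank k (res P) : ℤ) * D P).Finite :=
    D.hasFiniteSupport.subset (Function.support_mul_subset_right _ _)
  rw [divDeg, divDeg, divDeg, ← finsum_add_distrib (hfin D) (hfin E)]
  simp only [Finsupp.add_apply, mul_add]

theorem divDeg_single (P : Pt) (n : ℤ) :
    divDeg k res (Finsupp.single P n) = (Module.finrank k (res P) : ℤ) * n := by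
  classical
  rw [divDeg, finsum_eq_single _ P fun Q hQ => by rw [Finsupp.single_eq_of_ne hQ, mul_zero],
    Finsupp.single_eq_same]

end Divisor

namespace IsProjCurve

variable {k F : Type*} [Field k] [Field F] [Algebra k F] {Pt : Type*} {res : Pt → Type*}
  [∀ P, Field (res P)] [∀ P, Algebra k (res P)] {ord : Pt → F → ℤ} {ev : ∀ P, F → res P}
  {L : (Pt →₀ ℤ) → Submodule k F} {t : ℕ}

theorem mul_mem_L (hC : IsProjCurve k F res ord ev L t) {D E : Pt →₀ ℤ} {f g : F}
    (hf : f ∈ L D) (hg : g ∈ L E) : f * g ∈ L (D + E) := by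
  rcases eq_or_ne f 0 with rfl | hf0
  · rw [zero_mul]; exact zero_mem _
  rcases eq_or_ne g 0 with rfl | hg0
  · rw [mul_zero]; exact zero_mem _
  refine (hC.mem_L _ _).2 fun _ P => ?_
  have hfP := (hC.mem_L _ _).1 hf hf0 P
  have hgP := (hC.mem_L _ _).1 hg hg0 P
  rw [hC.ord_mul P f g hf0 hg0, Finsupp.add_apply]
  omega

theorem L_mono (hC : IsProjCurve k F res ord ev L t) {D E : Pt →₀ ℤ} (h : D ≤ E) :
    L D ≤ L E := fun f hf =>
  (hC.mem_L _ _).2 fun hf0 P => ((hC.mem_L _ _).1 hf hf0 P).trans (by gcongr; exact h P)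

theorem mem_L_of_ord_eq (hC : IsProjCurve k F res ord ev L t) {f : F}
    {A D : Pt →₀ ℤ} (hA : 0 ≤ A) (hord : ∀ P, ord P f = (A - D) P) : f ∈ L D :=
  (hC.mem_L _ _).2 fun _ P => by
    rw [hord, Finsupp.sub_apply, add_sub_cancel]
    exact hA P

/-- By Riemann–Roch, `hdegM` says `dim L(M) < 3 dim L(D)`. -/
theorem exists_mul_add_mul_mem_L (hC : IsProjCurve k F res ord ev L t)
    {D E₁ E₂ M : Pt →₀ ℤ} {f g : F} (hf : f ∈ L E₁) (hg : g ∈ L E₂)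
    (hD : D ≤ M) (h₁ : D + E₁ ≤ M) (h₂ : D + E₂ ≤ M)
    (hdegD : 2 * (t : ℤ) - 2 < divDeg k res D) (hdegM₀ : 2 * (t : ℤ) - 2 < divDeg k res M)
    (hdegM : divDeg k res M < 3 * divDeg k res D + 2 - 2 * t) :
    ∃ a ∈ L D, ∃ b ∈ L D, (a ≠ 0 ∨ b ≠ 0) ∧ a * f + b * g ∈ L D := by
  have := hC.finiteDimensional_L M
  have hdimD := hC.rr_eq D hdegD
  have hdimM := hC.rr_eq M hdegM₀
  exact exists_mul_add_mul_mem_of_finrank_lt (hC.L_mono hD)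
    (fun a ha => hC.L_mono h₁ (hC.mul_mem_L ha hf))
    (fun b hb => hC.L_mono h₂ (hC.mul_mem_L hb hg)) (by omega)

theorem exists_mul_add_mul_mem_L_single (hC : IsProjCurve k F res ord ev L t) {O : Pt}
    (hO : Module.finrank k (res O) = 1) {D₁ D₂ : Pt →₀ ℤ} (hD₁ : 0 ≤ D₁) (hD₂ : 0 ≤ D₂)
    (hdeg₁ : divDeg k res D₁ = t) (hdeg₂ : divDeg k res D₂ = t) {m₁ m₂ : ℤ} (hm₁ : 0 ≤ m₁)
    (hm₂₁ : m₂ ≤ m₁) (hm₁t : m₁ ≤ 2 * t + 1) {f g : F}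
    (hf : f ∈ L (D₁ + Finsupp.single O m₁)) (hg : g ∈ L (D₂ + Finsupp.single O m₂)) :
    ∃ a ∈ L (Finsupp.single O (3 * t : ℤ)), ∃ b ∈ L (Finsupp.single O (3 * t : ℤ)),
      (a ≠ 0 ∨ b ≠ 0) ∧ a * f + b * g ∈ L (Finsupp.single O (3 * t : ℤ)) := by
  have hdeg (n : ℤ) : divDeg k res (Finsupp.single O n) = n := by
    rw [divDeg_single, hO, Nat.cast_one, one_mul]
  refine hC.exists_mul_add_mul_mem_L (M := D₁ + D₂ + Finsupp.single O (3 * t + m₁)) hf hg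
    (le_add_of_nonneg_of_le (add_nonneg hD₁ hD₂) (Finsupp.single_le_single.2 (by omega))) ?_ ?_
    ?_ ?_ ?_
  · rw [add_left_comm, ← Finsupp.single_add]
    exact add_le_add_left (le_add_of_nonneg_right hD₂) _
  · rw [add_left_comm, ← Finsupp.single_add]
    exact add_le_add (le_add_of_nonneg_left hD₁) (Finsupp.single_le_single.2 (by omega))
  all_goals simp only [divDeg_add, hdeg, hdeg₁, hdeg₂]; omega

end IsProjCurve

/-- Lemma `PQlemma`(2).  Let `C` be a regular, irreducible curve,
projective over `k`, with function field `F`, arithmetic genus `t` and a `k`-rational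
point `O`, and fix for every closed point `R ≠ O` with `deg(R) ≥ t + 1` a function
`f_R` with divisor `(R) - D_R - (deg(R) - t)(O)`, `D_R` effective of degree `t`.
If `2t + 1 ≤ deg(Q) ≤ deg(P) ≤ 3t` (with `P, Q ≠ O`), then `{f_P, f_Q}` lies in
`L_{3t} + ⟨{f_R, l} : l ∈ RR_{3t}^*, 2t + 1 ≤ deg(R) ≤ 3t⟩`. -/
theorem statement13 (k F : Type*) [Field k] [Field F] [Algebra k F]
    {Pt : Type*} (res : Pt → Type*) [∀ P, Field (res P)] [∀ P, Algebra k (res P)]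
    (ord : Pt → F → ℤ) (ev : ∀ P, F → res P)
    (L : (Pt →₀ ℤ) → Submodule k F) (t : ℕ)
    (hC : IsProjCurve k F res ord ev L t)
    (O : Pt) (hO : Module.finrank k (res O) = 1)
    (fR : Pt → Fˣ) (DR : Pt → (Pt →₀ ℤ))
    (hfR : ∀ R, R ≠ O → t + 1 ≤ Module.finrank k (res R) →
      (∀ Q, 0 ≤ DR R Q) ∧ divDeg k res (DR R) = t ∧
      ∀ Q, ord Q (fR R : F) =
        ((Finsupp.single R 1 - DR R -
          ((Module.finrank k (res R) : ℤ) - t) • Finsupp.single O 1 : Pt →₀ ℤ)) Q)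
    (P Q : Pt) (hP : P ≠ O) (hQ : Q ≠ O)
    (hQ1 : 2 * t + 1 ≤ Module.finrank k (res Q))
    (hQP : Module.finrank k (res Q) ≤ Module.finrank k (res P))
    (hP3t : Module.finrank k (res P) ≤ 3 * t) :
    symbol (fR P) (fR Q) ∈
      Lsub L O (3 * t : ℤ) ⊔ AddSubgroup.closure
        { x | ∃ (R : Pt) (l : Fˣ), R ≠ O ∧
            2 * t + 1 ≤ Module.finrank k (res R) ∧ Module.finrank k (res R) ≤ 3 * t ∧
            (l : F) ∈ L (Finsupp.single O (3 * t : ℤ)) ∧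
            x = symbol (fR R) l } := by
  obtain ⟨hDP, hdegP, hordP⟩ := hfR P hP (by omega)
  obtain ⟨hDQ, hdegQ, hordQ⟩ := hfR Q hQ (by omega)
  have hfP : (fR P : F) ∈ L (DR P + Finsupp.single O ((Module.finrank k (res P) : ℤ) - t)) :=
    hC.mem_L_of_ord_eq (Finsupp.single_nonneg.2 zero_le_one) fun S => by
      rw [hordP, sub_sub, Finsupp.smul_single_one]
  have hfQ : (fR Q : F) ∈ L (DR Q + Finsupp.single O ((Module.finrank k (res Q) : ℤ) - t)) :=
    hC.mem_L_of_ord_eq (Finsupp.single_nonneg.2 zero_le_one) fun S => by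
      rw [hordQ, sub_sub, Finsupp.smul_single_one]
  obtain ⟨a, ha, b, hb, hab, hc⟩ := hC.exists_mul_add_mul_mem_L_single hO hDP hDQ hdegP hdegQ
    (by omega) (by omega) (by omega) hfP hfQ
  refine symbol_mem_of_mul_add_mul_eq (fun l m hl hm => ?_) (fun l hl => ?_)
    (fun l hl => ?_) ha hb hc hab rfl
  · exact AddSubgroup.mem_sup_left (AddSubgroup.subset_closure ⟨l, m, hl, hm, rfl⟩)
  · exact AddSubgroup.mem_sup_right
      (AddSubgroup.subset_closure ⟨P, l, hP, by omega, hP3t, hl, rfl⟩)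
  · exact AddSubgroup.mem_sup_right
      (AddSubgroup.subset_closure ⟨Q, l, hQ, hQ1, by omega, hl, rfl⟩)

end
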